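/- arXiv:math/0505437 — 4 statements merged into one kernel-verified Lean document; each statement's English description precedes it below -/
import Mathlib

section
/- For every integer p ≥ 1, the Bernoulli number B_{2p} satisfies B_{2p} = ((-1)^p (2p)!/2) · ( Σ_{l=0}^{p} (-1)^l D_{p-l}/(2l)! + D_p ). -/
/-- `D 0 = 1` and, for `k ≥ 1`, `D k` is the determinant of the `k × k` rational matrix
whose `(i, j)` entry is `1/(2(j-i)+3)!` when `j ≥ i`, `1` when `j = i - 1`,
and `0` when `j < i - 1`. -/
def D : ℕ → ℚ
  | 0 => 1
  | k + 1 =>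
    Matrix.det (fun i j : Fin (k + 1) =>
      if (i : ℕ) ≤ (j : ℕ) then 1 / ((2 * ((j : ℕ) - (i : ℕ)) + 3).factorial : ℚ)
      else if (j : ℕ) + 1 = (i : ℕ) then 1 else 0)

/-!
Expanding the Hessenberg determinant along its first column gives
`D (k + 1) = ∑ l ≤ k, (-1)^l D (k - l) / (2l + 3)!`, which says that `∑ Dₙ Xⁿ` is the reciprocal of
`sin √X / √X`. On the other hand `∑ (-1)ⁿ B₂ₙ Xⁿ / (2n)! = (√X / 2) cot (√X / 2)
= (1 + cos √X) / 2 · √X / sin √X`, so comparing coefficients of `(1 + cos √X) / 2 · ∑ Dₙ Xⁿ`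
gives the formula. The series are written with `cosh` and `sinh`, whose identity reduces to
`∑ k < 2n + 1, C(2n + 1, k) B_k = 0` for `n ≥ 1`, and the signs come from the substitution `X ↦ -X`.
-/

open Finset Matrix PowerSeries

section Hessenberg

variable {R : Type*} [CommRing R]

/-- The first row `b` is left free so that expanding along the first column stays in this family. -/
def hessenbergMatrix (b a : ℕ → R) (k : ℕ) : Matrix (Fin k) (Fin k) R :=
  of fun i j =>
    if (i : ℕ) = 0 then b j
    else if (i : ℕ) ≤ j then a (j - i)
    else if (j : ℕ) + 1 = i then 1 else 0

theorem det_hessenbergMatrix_succ_succ (b a : ℕ → R) (k : ℕ) :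
    (hessenbergMatrix b a (k + 2)).det =
      b 0 * (hessenbergMatrix a a (k + 1)).det -
        (hessenbergMatrix (fun n ↦ b (n + 1)) a (k + 1)).det := by
  have minor_zero : (hessenbergMatrix b a (k + 2)).submatrix (Fin.succAbove 0) Fin.succ =
      hessenbergMatrix a a (k + 1) := by
    ext i j
    simp only [hessenbergMatrix, submatrix_apply, Fin.succAbove_zero, of_apply, Fin.val_succ]
    split_ifs <;> first | rfl | contradiction | omega | (congr 1; omega)
  have minor_one : (hessenbergMatrix b a (k + 2)).submatrix (Fin.succAbove 1) Fin.succ =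
      hessenbergMatrix (fun n ↦ b (n + 1)) a (k + 1) := by
    ext i j
    rcases Fin.eq_zero_or_eq_succ i with rfl | ⟨i, rfl⟩
    · simp [hessenbergMatrix]
    · simp only [hessenbergMatrix, submatrix_apply, of_apply, Fin.one_succAbove_succ, Fin.val_succ]
      split_ifs <;> first | rfl | contradiction | omega | (congr 1; omega)
  rw [det_succ_column_zero, Fin.sum_univ_succ, Fin.sum_univ_succ, Fin.succ_zero_eq_one,
    minor_zero, minor_one]
  simp [hessenbergMatrix, sub_eq_add_neg]

theorem det_hessenbergMatrix (b a : ℕ → R) (k : ℕ) :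
    (hessenbergMatrix b a (k + 1)).det =
      ∑ l ∈ range (k + 1), (-1) ^ l * b l * (hessenbergMatrix a a (k - l)).det := by
  induction k generalizing b with
  | zero => simp [hessenbergMatrix]
  | succ k ih =>
    rw [det_hessenbergMatrix_succ_succ, ih (fun n ↦ b (n + 1)), sum_range_succ' _ (k + 1),
      pow_zero, one_mul, Nat.sub_zero, sub_eq_add_neg, ← sum_neg_distrib, add_comm]
    congr 1
    refine sum_congr rfl fun l _ ↦ ?_
    rw [Nat.add_sub_add_right, pow_succ]
    ring

end Hessenberg

theorem D_eq_det_hessenbergMatrix (k : ℕ) :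
    D k = (hessenbergMatrix (fun n ↦ 1 / ((2 * n + 3).factorial : ℚ))
      (fun n ↦ 1 / ((2 * n + 3).factorial : ℚ)) k).det := by
  cases k with
  | zero => simp [D]
  | succ k =>
    rw [D]
    congr 1
    ext i j
    simp only [hessenbergMatrix, of_apply]
    split_ifs <;> first | rfl | omega | simp_all

theorem D_succ (k : ℕ) :
    D (k + 1) = ∑ l ∈ range (k + 1), (-1) ^ l / ((2 * l + 3).factorial : ℚ) * D (k - l) := by
  simp only [D_eq_det_hessenbergMatrix, det_hessenbergMatrix]
  exact sum_congr rfl fun l _ ↦ by ring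

theorem sum_range_two_mul_add_one {M : Type*} [AddCommMonoid M] (f : ℕ → M) (n : ℕ) :
    ∑ k ∈ range (2 * n + 1), f k =
      ∑ m ∈ range (n + 1), f (2 * m) + ∑ m ∈ range n, f (2 * m + 1) := by
  induction n with
  | zero => simp
  | succ n ih =>
    rw [show 2 * (n + 1) + 1 = 2 * n + 1 + 1 + 1 by ring, sum_range_succ, sum_range_succ, ih,
      sum_range_succ (fun m ↦ f (2 * m)) (n + 1), sum_range_succ (fun m ↦ f (2 * m + 1)) n,
      show 2 * (n + 1) = 2 * n + 1 + 1 by ring]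
    abel

theorem sum_range_choose_mul_bernoulli_two_mul {n : ℕ} (hn : n ≠ 0) :
    ∑ m ∈ range (n + 1), ((2 * n + 1).choose (2 * m) : ℚ) * bernoulli (2 * m) =
      (2 * n + 1) / 2 := by
  have odd_terms : ∑ m ∈ range n, ((2 * n + 1).choose (2 * m + 1) : ℚ) * bernoulli (2 * m + 1) =
      -(2 * n + 1) / 2 := by
    obtain ⟨n, rfl⟩ := Nat.exists_eq_succ_of_ne_zero hn
    rw [sum_range_succ', sum_eq_zero fun m _ ↦ by
      rw [bernoulli_eq_zero_of_odd ⟨m + 1, by ring⟩ (by omega), mul_zero]]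
    rw [zero_add, mul_zero, zero_add, Nat.choose_one_right, bernoulli_one]
    push_cast
    ring
  have h := sum_bernoulli (2 * n + 1)
  rw [if_neg (by omega), sum_range_two_mul_add_one, odd_terms] at h
  linear_combination h

/-- `cosh √X` -/
def coshSqrt : ℚ⟦X⟧ := mk fun n ↦ 1 / ((2 * n).factorial : ℚ)

/-- `sinh √X / √X` -/
def sinhSqrtDivSqrt : ℚ⟦X⟧ := mk fun n ↦ 1 / ((2 * n + 1).factorial : ℚ)

/-- `(√X / 2) coth (√X / 2)` -/
def bernoulliEvenSeries : ℚ⟦X⟧ := mk fun n ↦ bernoulli (2 * n) / ((2 * n).factorial : ℚ)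

theorem two_smul_bernoulliEvenSeries_mul_sinhSqrtDivSqrt :
    (2 : ℚ) • (bernoulliEvenSeries * sinhSqrtDivSqrt) = coshSqrt + 1 := by
  ext n
  rw [coeff_smul, smul_eq_mul, coeff_mul, Finset.Nat.sum_antidiagonal_eq_sum_range_succ
    (fun i j ↦ coeff i bernoulliEvenSeries * coeff j sinhSqrtDivSqrt)]
  simp only [bernoulliEvenSeries, sinhSqrtDivSqrt, coshSqrt, coeff_mk, map_add, coeff_one]
  rcases eq_or_ne n 0 with rfl | hn
  · norm_num
  have term : ∀ m ∈ range (n + 1),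
      bernoulli (2 * m) / ((2 * m).factorial : ℚ) * (1 / ((2 * (n - m) + 1).factorial : ℚ)) =
        ((2 * n + 1).choose (2 * m) : ℚ) * bernoulli (2 * m) / ((2 * n + 1).factorial : ℚ) := by
    intro m hm
    have hm : 2 * m ≤ 2 * n + 1 := by rw [mem_range] at hm; omega
    rw [Nat.cast_choose ℚ hm, show 2 * n + 1 - 2 * m = 2 * (n - m) + 1 by omega]
    field_simp
  have hfac : ((2 * n).factorial : ℚ) ≠ 0 := by positivity
  rw [sum_congr rfl term, ← sum_div, sum_range_choose_mul_bernoulli_two_mul hn, if_neg hn,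
    Nat.factorial_succ]
  push_cast
  field_simp
  ring

theorem rescale_sinhSqrtDivSqrt_mul_mk_D : rescale (-1) sinhSqrtDivSqrt * mk D = 1 := by
  ext n
  rw [coeff_mul, Finset.Nat.sum_antidiagonal_eq_sum_range_succ
    (fun i j ↦ coeff i (rescale (-1) sinhSqrtDivSqrt) * coeff j (mk D))]
  simp only [sinhSqrtDivSqrt, coeff_rescale, coeff_mk, coeff_one]
  cases n with
  | zero => simp [D]
  | succ k =>
    rw [sum_range_succ', if_neg k.succ_ne_zero]
    simp only [Nat.add_sub_add_right, Nat.sub_zero, mul_zero, zero_add, pow_zero,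
      Nat.factorial_one, Nat.cast_one, div_one, one_mul]
    rw [D_succ, ← sum_add_distrib]
    refine sum_eq_zero fun l _ ↦ ?_
    rw [show 2 * (l + 1) + 1 = 2 * l + 3 by ring]
    ring

theorem two_smul_rescale_bernoulliEvenSeries :
    (2 : ℚ) • rescale (-1) bernoulliEvenSeries = rescale (-1) coshSqrt * mk D + mk D :=
  calc (2 : ℚ) • rescale (-1) bernoulliEvenSeries
      = rescale (-1) ((2 : ℚ) • (bernoulliEvenSeries * sinhSqrtDivSqrt)) * mk D := by
        rw [map_rat_smul, map_mul, smul_mul_assoc, mul_assoc, rescale_sinhSqrtDivSqrt_mul_mk_D,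
          mul_one]
    _ = rescale (-1) coshSqrt * mk D + mk D := by
        rw [two_smul_bernoulliEvenSeries_mul_sinhSqrtDivSqrt, map_add, map_one, add_mul, one_mul]

theorem bernoulli_even_eq_det_sum_general (p : ℕ) :
    bernoulli (2 * p) =
      ((-1 : ℚ) ^ p * ((2 * p).factorial : ℚ) / 2) *
        ((∑ l ∈ Finset.range (p + 1),
            (-1 : ℚ) ^ l * D (p - l) / ((2 * l).factorial : ℚ)) + D p) := by
  have hcoeff := congrArg (coeff p) two_smul_rescale_bernoulliEvenSeries
  rw [coeff_smul, smul_eq_mul, map_add, coeff_mul, Finset.Nat.sum_antidiagonal_eq_sum_range_succ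
    (fun i j ↦ coeff i (rescale (-1) coshSqrt) * coeff j (mk D))] at hcoeff
  simp only [bernoulliEvenSeries, coshSqrt, coeff_rescale, coeff_mk] at hcoeff
  have hsum : ∑ l ∈ range (p + 1), (-1 : ℚ) ^ l * D (p - l) / ((2 * l).factorial : ℚ) =
      ∑ l ∈ range (p + 1), (-1) ^ l * (1 / ((2 * l).factorial : ℚ)) * D (p - l) :=
    sum_congr rfl fun l _ ↦ by ring
  have hsign : ((-1 : ℚ) ^ p) ^ 2 = 1 := by rw [← pow_mul, pow_mul', neg_one_sq, one_pow]
  rw [hsum, ← Nat.succ_eq_add_one, ← hcoeff]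
  field_simp
  linear_combination (-bernoulli (2 * p)) * hsign

theorem bernoulli_even_eq_det_sum (p : ℕ) (hp : 1 ≤ p) :
    bernoulli (2 * p) =
      ((-1 : ℚ) ^ p * ((2 * p).factorial : ℚ) / 2) *
        ((∑ l ∈ Finset.range (p + 1),
            (-1 : ℚ) ^ l * D (p - l) / ((2 * l).factorial : ℚ)) + D p) :=
  bernoulli_even_eq_det_sum_general p
end

section
/- For every real number z with 0 < |z| < π, the series Σ_{p=0}^{∞} D_p z^{2p} converges and its sum equals z / sin z. -/
open Finset PowerSeries
open scoped Nat Topology NNReal Real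

namespace Matrix

variable {R : Type*} [CommRing R]

-- The first row `b` is kept apart so that the minors of an expansion along the first column
-- stay in the family.
def hessenberg (b a : ℕ → R) (n : ℕ) : Matrix (Fin n) (Fin n) R :=
  of fun i j => if (i : ℕ) = 0 then b j else if (i : ℕ) ≤ j then a (j - i)
    else if (j : ℕ) + 1 = i then 1 else 0

theorem hessenberg_submatrix_succ_succ (b a : ℕ → R) (n : ℕ) :
    (hessenberg b a (n + 1)).submatrix Fin.succ Fin.succ = hessenberg a a n := by
  ext i j
  simp only [hessenberg, submatrix_apply, of_apply, Fin.val_succ]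
  grind

theorem hessenberg_submatrix_succAbove_one_succ (b a : ℕ → R) (n : ℕ) :
    (hessenberg b a (n + 2)).submatrix (Fin.succAbove 1) Fin.succ =
      hessenberg (fun j => b (j + 1)) a (n + 1) := by
  ext i j
  have hi : ((Fin.succAbove 1 i : Fin (n + 2)) : ℕ) =
      if (i : ℕ) = 0 then 0 else (i : ℕ) + 1 := by
    rcases Fin.eq_zero_or_eq_succ i with rfl | ⟨k, rfl⟩
    · simp
    · simp [Fin.succAbove_of_le_castSucc, Fin.le_def]
  simp only [hessenberg, submatrix_apply, of_apply, Fin.val_succ, hi]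
  grind

theorem det_hessenberg_succ (b a : ℕ → R) (n : ℕ) :
    (hessenberg b a (n + 1)).det =
      ∑ kl ∈ antidiagonal n, (-1) ^ kl.1 * b kl.1 * (hessenberg a a kl.2).det := by
  induction n generalizing b with
  | zero => simp [hessenberg, det_unique]
  | succ n ih =>
    have h00 : hessenberg b a (n + 2) 0 0 = b 0 := by simp [hessenberg]
    have h10 : hessenberg b a (n + 2) 1 0 = 1 := by simp [hessenberg]
    have hrest (i : Fin n) : hessenberg b a (n + 2) i.succ.succ 0 = 0 := by simp [hessenberg]
    rw [det_succ_column_zero, Fin.sum_univ_succ, Fin.sum_univ_succ, Fin.succAbove_zero,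
      hessenberg_submatrix_succ_succ, Fin.succ_zero_eq_one,
      hessenberg_submatrix_succAbove_one_succ, ih (fun j => b (j + 1)),
      Finset.Nat.sum_antidiagonal_succ, h00, h10]
    simp [hrest, pow_succ, Finset.mul_sum]

end Matrix

open Matrix

theorem mk_det_hessenberg_mul_eq_one {R : Type*} [CommRing R] (a : ℕ → R) :
    PowerSeries.mk (fun n => (hessenberg a a n).det) *
      (1 - X * PowerSeries.mk fun i => (-1) ^ i * a i) = 1 := by
  ext (_ | n)
  · simp
  · rw [mul_sub, mul_one, mul_left_comm, map_sub, coeff_succ_X_mul, coeff_mk,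
      det_hessenberg_succ, coeff_mul, coeff_one, if_neg n.succ_ne_zero, sub_eq_zero,
      ← Finset.Nat.sum_antidiagonal_swap]
    simp only [Prod.fst_swap, Prod.snd_swap, coeff_mk]
    exact Finset.sum_congr rfl fun _ _ => by ring

namespace PowerSeries

theorem hasSum_coeff_mul_mul_pow {R : Type*} [NormedCommRing R] [CompleteSpace R]
    {f g : R⟦X⟧} {w : R} (hf : Summable fun n => ‖coeff n f * w ^ n‖)
    (hg : Summable fun n => ‖coeff n g * w ^ n‖) :
    HasSum (fun n => coeff n (f * g) * w ^ n)
      ((∑' n, coeff n f * w ^ n) * ∑' n, coeff n g * w ^ n) := by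
  have hcauchy (n : ℕ) : coeff n (f * g) * w ^ n =
      ∑ kl ∈ antidiagonal n, (coeff kl.1 f * w ^ kl.1) * (coeff kl.2 g * w ^ kl.2) := by
    rw [coeff_mul, Finset.sum_mul]
    refine Finset.sum_congr rfl fun kl hkl => ?_
    rw [← mem_antidiagonal.mp hkl, pow_add]
    ring
  simp_rw [hcauchy]
  rw [tsum_mul_tsum_eq_tsum_sum_antidiagonal_of_summable_norm hf hg]
  exact (summable_norm_sum_mul_antidiagonal_of_summable_norm hf hg).of_norm.hasSum

theorem eq_of_eventually_hasSum {𝕜 : Type*} [NontriviallyNormedField 𝕜] {f g : 𝕜⟦X⟧}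
    {F : 𝕜 → 𝕜} (hf : ∀ᶠ w in 𝓝 0, HasSum (fun n => coeff n f * w ^ n) (F w))
    (hg : ∀ᶠ w in 𝓝 0, HasSum (fun n => coeff n g * w ^ n) (F w)) : f = g := by
  have hF (h : 𝕜⟦X⟧) (hh : ∀ᶠ w in 𝓝 0, HasSum (fun n => coeff n h * w ^ n) (F w)) :
      HasFPowerSeriesAt F (FormalMultilinearSeries.ofScalars 𝕜 fun n => coeff n h) 0 := by
    rw [hasFPowerSeriesAt_iff]
    filter_upwards [hh] with w hw
    simpa [mul_comm] using hw
  have hcoeff := (hF f hf).eq_formalMultilinearSeries (hF g hg)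
  rw [FormalMultilinearSeries.ofScalars_series_eq_iff] at hcoeff
  ext n
  exact congrFun hcoeff n

end PowerSeries

def sqrtSincCoeff (n : ℕ) : ℚ := (-1) ^ n / (2 * n + 1)!

theorem D_eq_det_hessenberg (n : ℕ) :
    D n =
      (hessenberg (fun k => 1 / ((2 * k + 3)! : ℚ)) (fun k => 1 / ((2 * k + 3)! : ℚ)) n).det := by
  rcases n with _ | n
  · simp [D]
  · rw [D]
    congr 1
    ext i j
    simp only [hessenberg, of_apply]
    split_ifs <;> simp_all

theorem mk_D_mul_mk_sqrtSincCoeff_eq_one :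
    PowerSeries.mk (fun n => D n) * PowerSeries.mk sqrtSincCoeff = 1 := by
  have hs : PowerSeries.mk sqrtSincCoeff =
      1 - X * PowerSeries.mk fun k => (-1) ^ k * (1 / ((2 * k + 3)! : ℚ)) := by
    ext (_ | k)
    · simp [sqrtSincCoeff]
    · simp [sqrtSincCoeff, coeff_succ_X_mul, pow_succ, mul_add]
      ring
  rw [funext D_eq_det_hessenberg, hs]
  exact mk_det_hessenberg_mul_eq_one _

noncomputable def sqrtSinc (w : ℂ) : ℂ := ∑' n, (sqrtSincCoeff n : ℂ) * w ^ n

theorem summable_norm_sqrtSincCoeff_mul_pow (w : ℂ) :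
    Summable fun n => ‖(sqrtSincCoeff n : ℂ) * w ^ n‖ := by
  refine (Real.summable_pow_div_factorial ‖w‖).of_nonneg_of_le (fun _ => norm_nonneg _)
    fun n => ?_
  rw [norm_mul, norm_pow, mul_comm, div_eq_mul_inv]
  gcongr
  simp only [sqrtSincCoeff, Rat.cast_div, Rat.cast_pow, Rat.cast_neg, Rat.cast_one,
    Rat.cast_natCast, norm_div, norm_pow, norm_neg, norm_one, one_pow, one_div,
    Complex.norm_natCast]
  gcongr
  omega

theorem hasSum_sqrtSinc (w : ℂ) :
    HasSum (fun n => (sqrtSincCoeff n : ℂ) * w ^ n) (sqrtSinc w) :=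
  (summable_norm_sqrtSincCoeff_mul_pow w).of_norm.hasSum

theorem sqrtSinc_zero : sqrtSinc 0 = 1 := by
  rw [sqrtSinc, tsum_eq_single 0 fun n hn => by simp [hn]]
  simp [sqrtSincCoeff]

theorem sqrtSinc_sq_mul (z : ℂ) : sqrtSinc (z ^ 2) * z = Complex.sin z := by
  refine ((hasSum_sqrtSinc (z ^ 2)).mul_right z).unique
    ((Complex.hasSum_sin z).congr_fun fun n => ?_)
  simp only [sqrtSincCoeff]
  push_cast
  ring

theorem differentiable_sqrtSinc : Differentiable ℂ sqrtSinc := by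
  set p := FormalMultilinearSeries.ofScalars ℂ fun n => (sqrtSincCoeff n : ℂ)
  have hp : p.radius = ⊤ := p.radius_eq_top_of_summable_norm fun r => by
    simpa [p, FormalMultilinearSeries.ofScalars_norm] using
      summable_norm_sqrtSincCoeff_mul_pow r
  have hsum : p.sum = sqrtSinc := funext fun w => by
    simp [p, FormalMultilinearSeries.sum, sqrtSinc, mul_comm]
  have hps := p.hasFPowerSeriesOnBall (by simp [hp])
  rw [hp, hsum] at hps
  exact fun w => (hps.analyticAt_of_mem (by simp)).differentiableAt

theorem sqrtSinc_ne_zero {w : ℂ} (hw : ‖w‖ < π ^ 2) : sqrtSinc w ≠ 0 := by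
  obtain ⟨z, rfl⟩ := IsAlgClosed.exists_pow_nat_eq w two_pos
  rcases eq_or_ne z 0 with rfl | hz
  · simp [sqrtSinc_zero]
  intro h
  obtain ⟨k, rfl⟩ := Complex.sin_eq_zero_iff.mp (by rw [← sqrtSinc_sq_mul, h, zero_mul])
  have hk : (1 : ℝ) ≤ |(k : ℝ)| := by
    rw [← Int.cast_abs]
    exact_mod_cast Int.one_le_abs (by rintro rfl; simp at hz)
  rw [norm_pow, norm_mul, Complex.norm_intCast, Complex.norm_real,
    Real.norm_of_nonneg Real.pi_pos.le] at hw
  have := pow_le_pow_left₀ Real.pi_pos.le (le_mul_of_one_le_left Real.pi_pos.le hk) 2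
  linarith

theorem hasFPowerSeriesOnBall_inv_sqrtSinc {r : ℝ≥0} (hr0 : 0 < r) (hr : (r : ℝ) < π ^ 2) :
    HasFPowerSeriesOnBall (fun w => (sqrtSinc w)⁻¹)
      (cauchyPowerSeries (fun w => (sqrtSinc w)⁻¹) 0 r) 0 r := by
  refine DifferentiableOn.hasFPowerSeriesOnBall ?_ hr0
  refine differentiable_sqrtSinc.differentiableOn.inv fun w hw => sqrtSinc_ne_zero ?_
  rw [Metric.mem_closedBall, dist_zero_right] at hw
  linarith

theorem coeff_cauchyPowerSeries_inv_sqrtSinc {r : ℝ≥0} (hr0 : 0 < r) (hr : (r : ℝ) < π ^ 2)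
    (n : ℕ) : (cauchyPowerSeries (fun w => (sqrtSinc w)⁻¹) 0 r).coeff n = D n := by
  set p := cauchyPowerSeries (fun w => (sqrtSinc w)⁻¹) 0 r
  have hp := hasFPowerSeriesOnBall_inv_sqrtSinc hr0 hr
  set f : ℂ⟦X⟧ := PowerSeries.mk p.coeff
  set g : ℂ⟦X⟧ := map (Rat.castHom ℂ) (PowerSeries.mk sqrtSincCoeff)
  have hg (n : ℕ) : coeff n g = sqrtSincCoeff n := by simp [g]
  have hfg : f * g = 1 := by
    refine eq_of_eventually_hasSum (F := fun _ => 1) ?_ (.of_forall fun w => ?_)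
    · filter_upwards [Metric.eball_mem_nhds (0 : ℂ) (ENNReal.coe_pos.mpr hr0)] with w hw
      have hw' : ‖w‖₊ < r := by
        simpa [mem_eball_zero_iff, enorm_eq_nnnorm, ← NNReal.coe_lt_coe] using hw
      have hf : HasSum (fun n => coeff n f * w ^ n) (sqrtSinc w)⁻¹ := by
        simpa [f, mul_comm] using hp.hasSum hw
      have hf_norm : Summable fun n => ‖coeff n f * w ^ n‖ := by
        simpa [f, norm_mul, mul_comm] using
          p.summable_norm_mul_pow ((ENNReal.coe_lt_coe.mpr hw').trans_le hp.r_le)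
      have hprod := hasSum_coeff_mul_mul_pow hf_norm (g := g) (by
        simpa only [hg] using summable_norm_sqrtSincCoeff_mul_pow w)
      simp only [hg] at hprod
      rwa [hf.tsum_eq, (hasSum_sqrtSinc w).tsum_eq,
        inv_mul_cancel₀ (sqrtSinc_ne_zero ((NNReal.coe_lt_coe.mpr hw').trans hr))] at hprod
    · simpa using hasSum_single (f := fun n => coeff n (1 : ℂ⟦X⟧) * w ^ n) 0 fun n hn => by
        simp [coeff_one, hn]
  have hDg : map (Rat.castHom ℂ) (PowerSeries.mk fun n => D n) * g = 1 := by
    rw [← map_mul, mk_D_mul_mk_sqrtSincCoeff_eq_one, map_one]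
  simpa [f] using congrArg (coeff n) (left_inv_eq_right_inv hfg ((mul_comm _ _).trans hDg))

theorem hasSum_D_mul_pow {w : ℂ} (hw : ‖w‖ < π ^ 2) :
    HasSum (fun n => (D n : ℂ) * w ^ n) (sqrtSinc w)⁻¹ := by
  obtain ⟨r, hwr, hrπ⟩ := exists_between hw
  lift r to ℝ≥0 using (norm_nonneg w).trans hwr.le
  have hr0 : 0 < r := NNReal.coe_pos.mp ((norm_nonneg w).trans_lt hwr)
  have hw' : w ∈ Metric.eball (0 : ℂ) r := by
    simpa [mem_eball_zero_iff, enorm_eq_nnnorm, ← NNReal.coe_lt_coe] using hwr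
  simpa [coeff_cauchyPowerSeries_inv_sqrtSinc hr0 hrπ, mul_comm] using
    (hasFPowerSeriesOnBall_inv_sqrtSinc hr0 hrπ).hasSum hw'

theorem hasSum_det_eq_div_sin (z : ℝ) (h0 : 0 < |z|) (hπ : |z| < Real.pi) :
    HasSum (fun p : ℕ => (D p : ℝ) * z ^ (2 * p)) (z / Real.sin z) := by
  have hw : ‖(z : ℂ) ^ 2‖ < π ^ 2 := by
    rw [norm_pow, Complex.norm_real, Real.norm_eq_abs]
    gcongr
  have hz : (z : ℂ) ≠ 0 := Complex.ofReal_ne_zero.mpr (abs_pos.mp h0)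
  have hsinc : sqrtSinc ((z : ℂ) ^ 2) = Complex.sin z / z :=
    eq_div_of_mul_eq hz (sqrtSinc_sq_mul z)
  rw [← Complex.hasSum_ofReal]
  convert hasSum_D_mul_pow hw using 1
  · funext p
    push_cast
    ring
  · rw [hsinc, inv_div, Complex.ofReal_div, Complex.ofReal_sin]
end

section
/- For every real number z with 0 < |z| < π, the series Σ_{p=0}^{∞} (-1)^p (B_{2p}/(2p)!) z^{2p} converges and its sum equals (z/2) · cos(z/2) / sin(z/2). -/
/-!
Euler's evaluation of `ζ(2k)` bounds `|Bₙ| / n!` by `4 / (2π)ⁿ`, so for `‖w‖ < 2π` the series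
`∑ Bₙ wⁿ / n!` converges absolutely, and its Cauchy product with the exponential series, read off
from the formal identity `B(X) (eˣ - 1) = X`, shows that it sums to `w / (eʷ - 1)`. The odd
Bernoulli numbers vanish except `B₁ = -1/2`, so the even part sums to
`w / (eʷ - 1) + w / 2 = (w / 2) coth (w / 2)`, which at `w = i z` is `(z / 2) cot (z / 2)`.
-/

open Real Complex Finset PowerSeries
open scoped Nat

theorem PowerSeries.hasSum_coeff_mul_mul_pow_s5 {R : Type*} [NormedCommRing R] [CompleteSpace R]
    {f g : PowerSeries R} {w : R} (hf : Summable fun n => ‖coeff n f * w ^ n‖)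
    (hg : Summable fun n => ‖coeff n g * w ^ n‖) :
    HasSum (fun n => coeff n (f * g) * w ^ n)
      ((∑' n, coeff n f * w ^ n) * ∑' n, coeff n g * w ^ n) := by
  have hprod : Summable fun n =>
      ∑ kl ∈ antidiagonal n, coeff kl.1 f * w ^ kl.1 * (coeff kl.2 g * w ^ kl.2) :=
    (summable_norm_sum_mul_antidiagonal_of_summable_norm hf hg).of_norm
  rw [tsum_mul_tsum_eq_tsum_sum_antidiagonal_of_summable_norm hf hg]
  convert hprod.hasSum using 2 with n
  rw [coeff_mul, sum_mul]
  refine sum_congr rfl fun kl hkl => ?_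
  rw [← mem_antidiagonal.mp hkl, pow_add]
  ring

theorem summable_norm_coeff_exp_mul_pow (w : ℂ) :
    Summable fun n => ‖coeff n (PowerSeries.exp ℂ) * w ^ n‖ := by
  simpa [coeff_exp, norm_pow, div_eq_inv_mul] using Real.summable_pow_div_factorial ‖w‖

theorem hasSum_coeff_exp_mul_pow (w : ℂ) :
    HasSum (fun n => coeff n (PowerSeries.exp ℂ) * w ^ n) (Complex.exp w) := by
  rw [Complex.exp_eq_exp_ℂ]
  simpa [coeff_exp, div_eq_inv_mul] using NormedSpace.expSeries_div_hasSum_exp w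

theorem abs_bernoulli_two_mul_div_factorial_mul_le {k : ℕ} (hk : k ≠ 0) :
    |(bernoulli (2 * k) : ℝ)| / (2 * k)! * (2 * π) ^ (2 * k) ≤ π ^ 2 / 3 := by
  have hzeta := hasSum_zeta_nat hk
  have hle : (-1 : ℝ) ^ (k + 1) * 2 ^ (2 * k - 1) * π ^ (2 * k) * bernoulli (2 * k) / (2 * k)!
      ≤ π ^ 2 / 6 := by
    refine hasSum_le (fun n => ?_) hzeta hasSum_zeta_two
    rcases Nat.eq_zero_or_pos n with rfl | hn
    · simp [zero_pow (by omega : 2 * k ≠ 0)]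
    · gcongr
      · exact_mod_cast hn
      · omega
  have hnonneg := hzeta.nonneg fun n => by positivity
  have htwo : (2 : ℝ) ^ (2 * k) = 2 * 2 ^ (2 * k - 1) := by
    rw [← pow_succ', Nat.sub_add_cancel (by omega)]
  have habs : |(bernoulli (2 * k) : ℝ)| / (2 * k)! * (2 * π) ^ (2 * k) =
      2 * |(-1 : ℝ) ^ (k + 1) * 2 ^ (2 * k - 1) * π ^ (2 * k) * bernoulli (2 * k) / (2 * k)!| := by
    rw [mul_pow, htwo, abs_div, abs_mul, abs_mul, abs_mul, abs_pow, abs_neg, abs_one, one_pow,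
      abs_of_pos (by positivity : (0 : ℝ) < 2 ^ (2 * k - 1)),
      abs_of_pos (by positivity : (0 : ℝ) < π ^ (2 * k)), Nat.abs_cast]
    ring
  rw [habs, abs_of_nonneg hnonneg]
  linarith

theorem abs_bernoulli_div_factorial_mul_le (n : ℕ) :
    |(bernoulli n : ℝ)| / n ! * (2 * π) ^ n ≤ 4 := by
  rcases Nat.even_or_odd n with ⟨k, rfl⟩ | hodd
  · rcases eq_or_ne k 0 with rfl | hk
    · norm_num
    · rw [← two_mul]
      nlinarith [abs_bernoulli_two_mul_div_factorial_mul_le hk, pi_lt_d2, pi_pos]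
  · rcases eq_or_ne n 1 with rfl | hn
    · norm_num [bernoulli_one]
      linarith [pi_lt_d2]
    · rw [bernoulli_eq_zero_of_odd hodd (by obtain ⟨k, rfl⟩ := hodd; omega)]
      norm_num

theorem summable_norm_coeff_bernoulliPowerSeries_mul_pow {w : ℂ} (hw : ‖w‖ < 2 * π) :
    Summable fun n => ‖coeff n (bernoulliPowerSeries ℂ) * w ^ n‖ := by
  have hr : ‖w‖ / (2 * π) < 1 := (div_lt_one (by positivity)).mpr hw
  refine Summable.of_nonneg_of_le (fun n => norm_nonneg _) (fun n => ?_)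
    ((summable_geometric_of_lt_one (by positivity) hr).mul_left 4)
  have hnorm : ‖coeff n (bernoulliPowerSeries ℂ) * w ^ n‖ =
      |(bernoulli n : ℝ)| / n ! * (2 * π) ^ n * (‖w‖ / (2 * π)) ^ n := by
    simp only [bernoulliPowerSeries, coeff_mk, map_div₀, eq_ratCast, map_natCast, norm_mul,
      norm_div, norm_ratCast, RCLike.norm_natCast, norm_pow, div_pow]
    field_simp
  rw [hnorm]
  gcongr
  exact abs_bernoulli_div_factorial_mul_le n

theorem Complex.exp_ne_one_of_norm_lt {w : ℂ} (hw0 : w ≠ 0) (hw : ‖w‖ < 2 * π) :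
    Complex.exp w ≠ 1 := by
  rw [Ne, Complex.exp_eq_one_iff]
  rintro ⟨n, rfl⟩
  have hn : n ≠ 0 := by rintro rfl; simp at hw0
  have : (1 : ℝ) ≤ |(n : ℝ)| := by exact_mod_cast Int.one_le_abs hn
  simp only [norm_mul, norm_intCast, norm_ofNat, norm_real, norm_eq_abs, abs_of_pos pi_pos,
    norm_I, mul_one] at hw
  nlinarith [pi_pos]

theorem hasSum_bernoulli_div_factorial_mul_pow {w : ℂ} (hw0 : w ≠ 0) (hw : ‖w‖ < 2 * π) :
    HasSum (fun n => (bernoulli n : ℂ) / n ! * w ^ n) (w / (Complex.exp w - 1)) := by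
  have hB := summable_norm_coeff_bernoulliPowerSeries_mul_pow hw
  have hX : HasSum (fun n => coeff n (X : PowerSeries ℂ) * w ^ n) w := by
    convert hasSum_single (f := fun n => coeff n (X : PowerSeries ℂ) * w ^ n) 1
      (fun n hn => by simp [coeff_X, hn]) using 1
    simp
  have hmul : bernoulliPowerSeries ℂ * PowerSeries.exp ℂ = bernoulliPowerSeries ℂ + X := by
    rw [← bernoulliPowerSeries_mul_exp_sub_one]
    ring
  have hS : (∑' n, coeff n (bernoulliPowerSeries ℂ) * w ^ n) * Complex.exp w =
      (∑' n, coeff n (bernoulliPowerSeries ℂ) * w ^ n) + w := by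
    have h := hasSum_coeff_mul_mul_pow_s5 hB (summable_norm_coeff_exp_mul_pow w)
    rw [hmul, (hasSum_coeff_exp_mul_pow w).tsum_eq] at h
    refine h.unique ?_
    simp only [map_add, add_mul]
    exact hB.of_norm.hasSum.add hX
  have hS' : ∑' n, coeff n (bernoulliPowerSeries ℂ) * w ^ n = w / (Complex.exp w - 1) := by
    rw [eq_div_iff (sub_ne_zero.mpr (Complex.exp_ne_one_of_norm_lt hw0 hw))]
    linear_combination hS
  rw [← hS']
  simpa [bernoulliPowerSeries] using hB.of_norm.hasSum

theorem hasSum_bernoulli_two_mul_div_factorial_mul_pow {w : ℂ} (hw0 : w ≠ 0)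
    (hw : ‖w‖ < 2 * π) :
    HasSum (fun p => (bernoulli (2 * p) : ℂ) / (2 * p)! * w ^ (2 * p))
      (w / (Complex.exp w - 1) + w / 2) := by
  have h := (hasSum_bernoulli_div_factorial_mul_pow hw0 hw).add (hasSum_ite_eq 1 (w / 2))
  rw [← (mul_right_injective₀ two_ne_zero).hasSum_iff] at h
  · convert h using 2 with p
    simp [show 2 * p ≠ 1 by omega]
  · intro n hn
    have hodd : Odd n := Nat.not_even_iff_odd.mp fun ⟨k, hk⟩ => hn ⟨k, by simp [hk, two_mul]⟩
    rcases eq_or_ne n 1 with rfl | hn1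
    · simp only [bernoulli_one, Rat.cast_div, Rat.cast_neg, Rat.cast_one, Rat.cast_ofNat,
        Nat.factorial_one, Nat.cast_one, div_one, pow_one, ↓reduceIte]
      ring
    · simp [bernoulli_eq_zero_of_odd hodd (by obtain ⟨k, rfl⟩ := hodd; omega), hn1]

theorem Complex.mul_cot_eq_div_exp_sub_one_add_half {u : ℂ} (h : exp (2 * I * u) ≠ 1) :
    u * cot u = 2 * I * u / (exp (2 * I * u) - 1) + 2 * I * u / 2 := by
  have h₁ : exp (2 * I * u) - 1 ≠ 0 := sub_ne_zero.mpr h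
  have h₂ : I * (1 - exp (2 * I * u)) ≠ 0 := mul_ne_zero I_ne_zero (sub_ne_zero.mpr h.symm)
  rw [cot_eq_exp_ratio, div_add_div _ _ h₁ two_ne_zero, mul_div_assoc',
    div_eq_div_iff h₂ (mul_ne_zero h₁ two_ne_zero)]
  linear_combination 2 * u * (exp (2 * I * u) ^ 2 - 1) * I_sq

theorem hasSum_bernoulli_even (z : ℝ) (h0 : 0 < |z|) (hπ : |z| < Real.pi) :
    HasSum
      (fun p : ℕ =>
        (-1 : ℝ) ^ p * ((bernoulli (2 * p) : ℚ) : ℝ) / ((2 * p).factorial : ℝ) * z ^ (2 * p))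
      ((z / 2) * Real.cos (z / 2) / Real.sin (z / 2)) := by
  have hw0 : 2 * I * ((z / 2 : ℝ) : ℂ) ≠ 0 := by simpa using abs_pos.mp h0
  have hnorm : ‖2 * I * ((z / 2 : ℝ) : ℂ)‖ = |z| := by
    simp [mul_div_cancel₀]
  have hw : ‖2 * I * ((z / 2 : ℝ) : ℂ)‖ < 2 * π := by
    linarith [pi_pos]
  have h := hasSum_bernoulli_two_mul_div_factorial_mul_pow hw0 hw
  rw [← mul_cot_eq_div_exp_sub_one_add_half (exp_ne_one_of_norm_lt hw0 hw)] at h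
  rw [show 2 * I * ((z / 2 : ℝ) : ℂ) = z * I by push_cast; ring] at h
  rw [mul_div_assoc, ← Real.cot_eq_cos_div_sin, ← Complex.hasSum_ofReal, Complex.ofReal_mul,
    Complex.ofReal_cot]
  convert h using 2 with p
  push_cast
  rw [mul_pow, pow_mul I, I_sq]
  ring
end

section
/- For every integer p ≥ 1, the Riemann zeta function satisfies ζ(2p) = π^{2p} · D_p / (2 · (1 − 2^{1−2p})). -/
open Finset PowerSeries Nat

section HessenbergToeplitz

variable {R : Type*} [CommRing R] (a : ℕ → R)

def hessenbergToeplitzEntry (r c : ℕ) : R :=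
  if r ≤ c then a (c - r) else if c + 1 = r then 1 else 0

def hessenbergToeplitz (k : ℕ) : Matrix (Fin k) (Fin k) R :=
  Matrix.of fun r c => hessenbergToeplitzEntry a r c

def hessenbergToeplitzMinor (i k : ℕ) : Matrix (Fin k) (Fin k) R :=
  Matrix.of fun r c => hessenbergToeplitzEntry a (if (r : ℕ) < i then r else r + 1) c

theorem hessenbergToeplitzMinor_self (i : ℕ) :
    hessenbergToeplitzMinor a i i = hessenbergToeplitz a i := by
  ext r c
  simp [hessenbergToeplitzMinor, hessenbergToeplitz]

theorem det_hessenbergToeplitzMinor_succ {i k : ℕ} (h : i ≤ k) :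
    (hessenbergToeplitzMinor a i (k + 1)).det = (hessenbergToeplitzMinor a i k).det := by
  have hlast (c : Fin (k + 1)) :
      hessenbergToeplitzMinor a i (k + 1) (Fin.last k) c = if c = Fin.last k then 1 else 0 := by
    have := c.isLt
    simp only [hessenbergToeplitzMinor, hessenbergToeplitzEntry, Matrix.of_apply, Fin.val_last,
      if_neg (not_lt.2 h), if_neg (by omega : ¬ k + 1 ≤ (c : ℕ)), Fin.ext_iff, add_left_inj]
  rw [Matrix.det_succ_row _ (Fin.last k), Finset.sum_eq_single (Fin.last k)]
  · simp only [hlast, Fin.succAbove_last, if_true, mul_one, Fin.val_last, ← two_mul,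
      pow_mul, neg_one_sq, one_pow, one_mul]
    rfl
  · intro c _ hc
    simp [hlast, hc]
  · simp

theorem det_hessenbergToeplitzMinor {i k : ℕ} (h : i ≤ k) :
    (hessenbergToeplitzMinor a i k).det = (hessenbergToeplitz a i).det := by
  induction k, h using Nat.le_induction with
  | base => rw [hessenbergToeplitzMinor_self]
  | succ k hik ih => rw [det_hessenbergToeplitzMinor_succ a hik, ih]

theorem submatrix_hessenbergToeplitz_succAbove_last {k : ℕ} (i : Fin (k + 1)) :
    (hessenbergToeplitz a (k + 1)).submatrix i.succAbove (Fin.last k).succAbove =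
      hessenbergToeplitzMinor a i k := by
  ext r c
  rw [Fin.succAbove_last, Matrix.submatrix_apply]
  by_cases hr : (r : ℕ) < i
  · rw [Fin.succAbove_of_castSucc_lt i r hr]
    simp [hessenbergToeplitz, hessenbergToeplitzMinor, hr]
  · rw [Fin.succAbove_of_le_castSucc i r (not_lt.1 hr)]
    simp [hessenbergToeplitz, hessenbergToeplitzMinor, hr]

theorem det_hessenbergToeplitz_succ (k : ℕ) :
    (hessenbergToeplitz a (k + 1)).det =
      ∑ i ∈ range (k + 1), (-1) ^ (i + k) * a (k - i) * (hessenbergToeplitz a i).det := by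
  rw [Matrix.det_succ_column _ (Fin.last k), ← Fin.sum_univ_eq_sum_range]
  refine Finset.sum_congr rfl fun i _ => ?_
  have hi : (i : ℕ) ≤ k := Nat.lt_succ_iff.1 i.isLt
  rw [submatrix_hessenbergToeplitz_succAbove_last, det_hessenbergToeplitzMinor a hi]
  simp only [hessenbergToeplitz, hessenbergToeplitzEntry, Matrix.of_apply, Fin.val_last, if_pos hi]

theorem det_hessenbergToeplitz_eq_of_recurrence (f : ℕ → R) (h0 : f 0 = 1)
    (hsucc : ∀ k, f (k + 1) = ∑ i ∈ range (k + 1), (-1) ^ (i + k) * a (k - i) * f i)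
    (k : ℕ) :
    (hessenbergToeplitz a k).det = f k := by
  induction k using Nat.strong_induction_on with
  | _ k ih =>
    rcases k with _ | k
    · simp [h0]
    · rw [det_hessenbergToeplitz_succ, hsucc]
      exact Finset.sum_congr rfl fun i hi => by rw [ih i (by simpa [Nat.lt_succ_iff] using hi)]

end HessenbergToeplitz

theorem Finset.sum_range_two_mul {M : Type*} [AddCommMonoid M] (f : ℕ → M) (n : ℕ) :
    ∑ i ∈ range (2 * n), f i = ∑ j ∈ range n, (f (2 * j) + f (2 * j + 1)) := by
  induction n with
  | zero => simp
  | succ n ih =>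
    rw [mul_add, mul_one, sum_range_succ, sum_range_succ, sum_range_succ, ih, add_assoc]

theorem rescale_two_bernoulliPowerSeries_mul_exp_add_one :
    rescale (2 : ℚ) (bernoulliPowerSeries ℚ) * (exp ℚ + 1) =
      C (2 : ℚ) * bernoulliPowerSeries ℚ := by
  have hB := bernoulliPowerSeries_mul_exp_sub_one ℚ
  have hX : rescale (2 : ℚ) X = C (2 : ℚ) * X := by
    ext n
    simp only [coeff_rescale, coeff_X, coeff_C_mul]
    split <;> simp_all
  have hexp : exp ℚ - 1 ≠ 0 := fun h => by simpa [coeff_exp] using congrArg (coeff 1) h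
  apply mul_right_cancel₀ hexp
  calc rescale (2 : ℚ) (bernoulliPowerSeries ℚ) * (exp ℚ + 1) * (exp ℚ - 1)
      = rescale (2 : ℚ) (bernoulliPowerSeries ℚ * (exp ℚ - 1)) := by
        rw [map_mul, map_sub, map_one, ← Nat.cast_ofNat, ← exp_pow_eq_rescale_exp]; ring
    _ = C (2 : ℚ) * bernoulliPowerSeries ℚ * (exp ℚ - 1) := by rw [hB, hX, mul_assoc, hB]

theorem sum_range_succ_choose_mul_two_pow_mul_bernoulli (n : ℕ) :
    ∑ k ∈ range (n + 1), (n.choose k : ℚ) * 2 ^ k * bernoulli k =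
      (2 - 2 ^ n) * bernoulli n := by
  have h := congrArg (coeff n) rescale_two_bernoulliPowerSeries_mul_exp_add_one
  rw [mul_add, mul_one, map_add, coeff_mul, sum_antidiagonal_eq_sum_range_succ_mk] at h
  simp only [coeff_rescale, bernoulliPowerSeries, coeff_mk, coeff_exp, coeff_C_mul,
    Algebra.algebraMap_self, RingHom.id_apply] at h
  have hfac (m : ℕ) : (m ! : ℚ) ≠ 0 := mod_cast factorial_ne_zero m
  have hterm : ∀ k ∈ range (n + 1), (n.choose k : ℚ) * 2 ^ k * bernoulli k =
      n ! * (2 ^ k * (bernoulli k / k !) * (1 / (n - k)!)) := by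
    intro k hk
    rw [Nat.cast_choose ℚ (Nat.lt_succ_iff.1 (mem_range.1 hk))]
    field_simp
  rw [sum_congr rfl hterm, ← mul_sum, eq_sub_of_add_eq h]
  field_simp

theorem sum_range_succ_choose_mul_two_pow_sub_two_mul_bernoulli_of_odd {n : ℕ} (hn : Odd n)
    (h1 : 1 < n) : ∑ k ∈ range (n + 1), (n.choose k : ℚ) * (2 ^ k - 2) * bernoulli k = 0 := by
  have hsplit : ∑ k ∈ range (n + 1), (n.choose k : ℚ) * (2 ^ k - 2) * bernoulli k =
      ∑ k ∈ range (n + 1), (n.choose k : ℚ) * 2 ^ k * bernoulli k -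
        2 * ∑ k ∈ range (n + 1), (n.choose k : ℚ) * bernoulli k := by
    rw [mul_sum, ← sum_sub_distrib]
    exact sum_congr rfl fun k _ => by ring
  rw [hsplit, sum_range_succ_choose_mul_two_pow_mul_bernoulli, sum_range_succ, sum_bernoulli,
    if_neg h1.ne', bernoulli_eq_zero_of_odd hn h1]
  ring

theorem sum_range_succ_choose_two_mul_mul_two_pow_sub_two_mul_bernoulli {m : ℕ} (hm : m ≠ 0) :
    ∑ j ∈ range (m + 1),
      ((2 * m + 1).choose (2 * j) : ℚ) * (2 ^ (2 * j) - 2) * bernoulli (2 * j) = 0 := by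
  have hodd (j : ℕ) : ((2 * m + 1).choose (2 * j + 1) : ℚ) * (2 ^ (2 * j + 1) - 2) *
      bernoulli (2 * j + 1) = 0 := by
    rcases eq_or_ne j 0 with rfl | hj
    · norm_num
    · rw [bernoulli_eq_zero_of_odd (odd_two_mul_add_one j) (by omega), mul_zero]
  have h := sum_range_succ_choose_mul_two_pow_sub_two_mul_bernoulli_of_odd
    (odd_two_mul_add_one m) (by omega)
  rw [show 2 * m + 1 + 1 = 2 * (m + 1) by ring, sum_range_two_mul] at h
  simpa only [hodd, add_zero] using h

/-- The coefficient of `x ^ (2 * p)` in the Taylor expansion of `x / sin x`. -/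
def invSincCoeff (p : ℕ) : ℚ :=
  (-1) ^ (p + 1) * (2 ^ (2 * p) - 2) * bernoulli (2 * p) / (2 * p)!

theorem invSincCoeff_zero : invSincCoeff 0 = 1 := by norm_num [invSincCoeff]

theorem invSincCoeff_succ (k : ℕ) :
    invSincCoeff (k + 1) = ∑ i ∈ range (k + 1),
      (-1) ^ (i + k) * (1 / ((2 * (k - i) + 3)! : ℚ)) * invSincCoeff i := by
  have hfac (m : ℕ) : (m ! : ℚ) ≠ 0 := mod_cast factorial_ne_zero m
  have hterm : ∀ i ∈ range (k + 1),
      (-1) ^ (i + k) * (1 / ((2 * (k - i) + 3)! : ℚ)) * invSincCoeff i =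
        (-1) ^ (k + 1) / ((2 * k + 3)! : ℚ) *
          (((2 * (k + 1) + 1).choose (2 * i) : ℚ) * (2 ^ (2 * i) - 2) * bernoulli (2 * i)) := by
    intro i hi
    have hik : i ≤ k := Nat.lt_succ_iff.1 (mem_range.1 hi)
    have hsign : (-1 : ℚ) ^ (i + k) * (-1) ^ (i + 1) = (-1) ^ (k + 1) := by
      rw [← pow_add, show i + k + (i + 1) = 2 * i + (k + 1) by ring, pow_add, pow_mul, neg_one_sq,
        one_pow, one_mul]
    rw [Nat.cast_choose ℚ (by omega : 2 * i ≤ 2 * (k + 1) + 1),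
      show 2 * (k + 1) + 1 - 2 * i = 2 * (k - i) + 3 by omega,
      show 2 * (k + 1) + 1 = 2 * k + 3 by ring, ← hsign, invSincCoeff]
    field_simp
  have heven := sum_range_succ_choose_two_mul_mul_two_pow_sub_two_mul_bernoulli (succ_ne_zero k)
  rw [sum_range_succ, Nat.choose_succ_self_right] at heven
  rw [sum_congr rfl hterm, ← mul_sum, eq_neg_of_add_eq_zero_left heven, invSincCoeff,
    show 2 * k + 3 = 2 * (k + 1) + 1 by ring, factorial_succ]
  push_cast
  field_simp
  ring

theorem D_eq_det_hessenbergToeplitz (k : ℕ) :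
    D k = (hessenbergToeplitz (fun n => 1 / ((2 * n + 3)! : ℚ)) k).det := by
  cases k with
  | zero => simp [D]
  | succ k => rfl

theorem D_eq_invSincCoeff (p : ℕ) : D p = invSincCoeff p := by
  rw [D_eq_det_hessenbergToeplitz,
    det_hessenbergToeplitz_eq_of_recurrence _ _ invSincCoeff_zero invSincCoeff_succ]

theorem two_zpow_two_mul_sub_one_mul_two_mul_one_sub (p : ℕ) :
    (2 : ℂ) ^ (2 * p - 1 : ℤ) * (2 * (1 - 2 ^ ((1 : ℤ) - 2 * p))) = 2 ^ (2 * p) - 2 := by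
  have hinv : (2 : ℂ) ^ (2 * p - 1 : ℤ) * 2 ^ ((1 : ℤ) - 2 * p) = 1 := by
    rw [← zpow_add₀ two_ne_zero, sub_add_sub_cancel', sub_self, zpow_zero]
  have hmul : (2 : ℂ) ^ (2 * p - 1 : ℤ) * 2 = 2 ^ (2 * p) := by
    rw [← zpow_add_one₀ two_ne_zero, sub_add_cancel]
    exact_mod_cast zpow_natCast (2 : ℂ) (2 * p)
  linear_combination hmul - 2 * hinv

theorem zeta_even_eq_det_general (p : ℕ) :
    riemannZeta (2 * p) =
      (Real.pi : ℂ) ^ (2 * p) * (D p : ℂ) /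
        (2 * (1 - (2 : ℂ) ^ ((1 : ℤ) - 2 * (p : ℤ)))) := by
  have hne : (2 : ℂ) ^ ((1 : ℤ) - 2 * p) ≠ 1 := by
    rw [Ne, ← Complex.ofReal_ofNat, ← Complex.ofReal_zpow, Complex.ofReal_eq_one,
      zpow_eq_one_iff_right₀ zero_le_two (by norm_num)]
    omega
  rw [riemannZeta_two_mul_nat', D_eq_invSincCoeff, invSincCoeff,
    eq_div_iff (mul_ne_zero two_ne_zero (sub_ne_zero.2 hne.symm))]
  push_cast
  rw [← two_zpow_two_mul_sub_one_mul_two_mul_one_sub]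
  ring

theorem zeta_even_eq_det (p : ℕ) (hp : 1 ≤ p) :
    riemannZeta (2 * p) =
      (Real.pi : ℂ) ^ (2 * p) * (D p : ℂ) /
        (2 * (1 - (2 : ℂ) ^ ((1 : ℤ) - 2 * (p : ℤ)))) :=
  zeta_even_eq_det_general p
end
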